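/- arXiv:1912.01358 — 10 statements merged into one kernel-verified Lean document; each statement's English description precedes it below -/
import Mathlib

section
/- Let (A, μ, ε) be an associative color algebra, i.e. a G-graded K-vector space with an even bilinear map μ and skew-symmetric bicharacter ε satisfying μ(μ(x,y),z) = μ(x,μ(y,z)) for all homogeneous x, y, z, and let α : A → A be an even linear map such that (A, μ, ε, α) is a Hom-associative color algebra. Then for any fixed element ξ ∈ A of degree 0, the quadruple (A, μ_ξ, ε, α) is again a Hom-associative color algebra, where μ_ξ(x,y) = μ(μ(x,ξ),y) for all homogeneous x, y. -/
open scoped TensorProduct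

variable {K G V : Type*} [Field K] [AddCommGroup G] [AddCommGroup V] [Module K V]

/-- A skew-symmetric bicharacter on the abelian group `G` with values in `K \ {0}`. -/
def IsBicharacter (ε : G → G → K) : Prop :=
  (∀ a b, ε a b ≠ 0) ∧ (∀ a b, ε a b * ε b a = 1) ∧
    (∀ a b c, ε a (b + c) = ε a b * ε a c) ∧
    (∀ a b c, ε (a + b) c = ε a c * ε b c)

/-- `μ` is an even bilinear map for the grading `ℬ`: `μ(ℬ a, ℬ b) ⊆ ℬ (a + b)`. -/
def IsEvenBilinear (ℬ : G → Submodule K V) (μ : V →ₗ[K] V →ₗ[K] V) : Prop :=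
  ∀ ⦃a b : G⦄ ⦃x y : V⦄, x ∈ ℬ a → y ∈ ℬ b → μ x y ∈ ℬ (a + b)

/-- `α` is an even linear map for the grading `ℬ`: `α(ℬ a) ⊆ ℬ a`. -/
def IsEvenLinear (ℬ : G → Submodule K V) (α : V →ₗ[K] V) : Prop :=
  ∀ ⦃a : G⦄ ⦃x : V⦄, x ∈ ℬ a → α x ∈ ℬ a

/-- `(V, μ, ε, α)` is a Hom-associative color algebra. -/
def IsHomAssociativeColor (ℬ : G → Submodule K V) (ε : G → G → K)
    (μ : V →ₗ[K] V →ₗ[K] V) (α : V →ₗ[K] V) : Prop :=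
  IsBicharacter ε ∧ IsEvenBilinear ℬ μ ∧ IsEvenLinear ℬ α ∧
    ∀ ⦃a b c : G⦄ ⦃x y z : V⦄, x ∈ ℬ a → y ∈ ℬ b → z ∈ ℬ c →
      μ (α x) (μ y z) = μ (μ x y) (α z)

/-- `(V, br, ε, α)` is a Hom-Lie color algebra. -/
def IsHomLieColor (ℬ : G → Submodule K V) (ε : G → G → K)
    (br : V →ₗ[K] V →ₗ[K] V) (α : V →ₗ[K] V) : Prop :=
  IsBicharacter ε ∧ IsEvenBilinear ℬ br ∧ IsEvenLinear ℬ α ∧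
    (∀ ⦃a b : G⦄ ⦃x y : V⦄, x ∈ ℬ a → y ∈ ℬ b → br x y = -(ε a b • br y x)) ∧
    (∀ ⦃a b c : G⦄ ⦃x y z : V⦄, x ∈ ℬ a → y ∈ ℬ b → z ∈ ℬ c →
      ε c a • br (α x) (br y z) + ε a b • br (α y) (br z x) +
        ε b c • br (α z) (br x y) = 0)

/-- `(V, μ, br, ε, α)` is a Hom-Poisson color algebra. -/
def IsHomPoissonColor (ℬ : G → Submodule K V) (ε : G → G → K)
    (μ br : V →ₗ[K] V →ₗ[K] V) (α : V →ₗ[K] V) : Prop :=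
  IsHomAssociativeColor ℬ ε μ α ∧ IsHomLieColor ℬ ε br α ∧
    ∀ ⦃a b c : G⦄ ⦃x y z : V⦄, x ∈ ℬ a → y ∈ ℬ b → z ∈ ℬ c →
      br (α x) (μ y z) = μ (br x y) (α z) + ε a b • μ (α y) (br x z)

/-- twisting a Hom-associative color algebra by a degree-zero element
`ξ` via `μ_ξ(x, y) = μ(μ(x, ξ), y)` yields a Hom-associative color algebra. -/
theorem stmt0 (ℬ : G → Submodule K V) (ε : G → G → K)
    (μ : V →ₗ[K] V →ₗ[K] V) (α : V →ₗ[K] V)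
    (hassoc : ∀ ⦃a b c : G⦄ ⦃x y z : V⦄, x ∈ ℬ a → y ∈ ℬ b → z ∈ ℬ c →
      μ (μ x y) z = μ x (μ y z))
    (hHom : IsHomAssociativeColor ℬ ε μ α)
    (ξ : V) (hξ : ξ ∈ ℬ (0 : G)) :
    IsHomAssociativeColor ℬ ε (μ.comp (μ.flip ξ)) α := by
  obtain ⟨hbi, heven, halpha, hhom⟩ := hHom
  refine ⟨hbi, ?_, halpha, ?_⟩
  · intro a b x y hx hy
    have h := heven (heven hx hξ) hy
    simpa using h
  · intro a b c x y z hx hy hz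
    simp only [LinearMap.comp_apply, LinearMap.flip_apply]
    calc μ (μ (α x) ξ) (μ (μ y ξ) z)
        = μ (α x) (μ ξ (μ (μ y ξ) z)) :=
          hassoc (halpha hx) hξ (heven (heven hy hξ) hz)
      _ = μ (α x) (μ (μ ξ (μ y ξ)) z) := by
          rw [hassoc hξ (heven hy hξ) hz]
      _ = μ (μ x (μ ξ (μ y ξ))) (α z) :=
          hhom hx (heven hξ (heven hy hξ)) hz
      _ = μ (μ (μ x ξ) (μ y ξ)) (α z) := by
          rw [← hassoc hx hξ (heven hy hξ)]
      _ = μ (μ (μ (μ x ξ) y) ξ) (α z) := by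
          rw [hassoc (heven hx hξ) hy hξ]
end

section
/- Let (P, ·, [·,·], ε, α) be a Hom-Poisson color algebra and let σ : G × G → K∖{0} be a symmetric multiplier on G, i.e. σ(x,y) = σ(y,x) for all x, y ∈ G and the quantity σ(x,y)σ(z,x+y) is invariant under cyclic permutations of x, y, z ∈ G. Then (P, ∗^σ, [·,·]^σ, ε, α) is also a Hom-Poisson color algebra, where for homogeneous x, y one sets x ∗^σ y = σ(x,y) x·y and [x,y]^σ = σ(x,y)[x,y] (σ being evaluated at the degrees of x and y). -/
open scoped TensorProduct

variable {K G V : Type*} [Field K] [AddCommGroup G] [AddCommGroup V] [Module K V]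

/-- twisting a Hom-Poisson color algebra by a symmetric multiplier
`σ` via `x ∗ y = σ(x, y) • x·y` and `{x, y} = σ(x, y) • [x, y]` (σ evaluated at
the degrees) yields a Hom-Poisson color algebra. -/
theorem stmt2 (ℬ : G → Submodule K V) (ε : G → G → K)
    (μ br : V →ₗ[K] V →ₗ[K] V) (α : V →ₗ[K] V)
    (hP : IsHomPoissonColor ℬ ε μ br α)
    (σ : G → G → K) (hne : ∀ a b, σ a b ≠ 0)
    (hsymm : ∀ a b, σ a b = σ b a)
    (hcyc : ∀ a b c, σ a b * σ c (a + b) = σ b c * σ a (b + c))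
    (μ' br' : V →ₗ[K] V →ₗ[K] V)
    (hμ' : ∀ ⦃a b : G⦄ ⦃x y : V⦄, x ∈ ℬ a → y ∈ ℬ b → μ' x y = σ a b • μ x y)
    (hbr' : ∀ ⦃a b : G⦄ ⦃x y : V⦄, x ∈ ℬ a → y ∈ ℬ b → br' x y = σ a b • br x y) :
    IsHomPoissonColor ℬ ε μ' br' α := by
  obtain ⟨⟨hbi, hμev, hαev, hassoc⟩, ⟨_, hbrev, _, hskew, hjac⟩, hleib⟩ := hP
  -- helper: composite values
  have hμ'' : ∀ ⦃a b : G⦄ ⦃x y : V⦄, x ∈ ℬ a → y ∈ ℬ b →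
      ∀ (t : K), μ' x (t • y) = (σ a b * t) • μ x y := by
    intro a b x y hx hy t
    rw [hμ' hx (Submodule.smul_mem _ _ hy), map_smul, smul_smul]
  have hbr'' : ∀ ⦃a b : G⦄ ⦃x y : V⦄, x ∈ ℬ a → y ∈ ℬ b →
      ∀ (t : K), br' x (t • y) = (σ a b * t) • br x y := by
    intro a b x y hx hy t
    rw [hbr' hx (Submodule.smul_mem _ _ hy), map_smul, smul_smul]
  refine ⟨⟨hbi, ?_, hαev, ?_⟩, ⟨hbi, ?_, hαev, ?_, ?_⟩, ?_⟩
  · intro a b x y hx hy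
    rw [hμ' hx hy]; exact Submodule.smul_mem _ _ (hμev hx hy)
  · intro a b c x y z hx hy hz
    rw [hμ' hy hz, hμ'' (hαev hx) (hμev hy hz), hμ' hx hy, map_smul,
      LinearMap.smul_apply, hμ' (hμev hx hy) (hαev hz), smul_smul,
      hassoc hx hy hz]
    congr 1
    rw [hsymm (a + b) c]
    linear_combination - hcyc a b c
  · intro a b x y hx hy
    rw [hbr' hx hy]; exact Submodule.smul_mem _ _ (hbrev hx hy)
  · intro a b x y hx hy
    rw [hbr' hx hy, hbr' hy hx, hskew hx hy, hsymm b a, smul_neg, smul_comm]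
  · intro a b c x y z hx hy hz
    rw [hbr' hy hz, hbr'' (hαev hx) (hbrev hy hz),
      hbr' hz hx, hbr'' (hαev hy) (hbrev hz hx),
      hbr' hx hy, hbr'' (hαev hz) (hbrev hx hy)]
    set C := σ a b * σ c (a + b) with hC
    have h1 : σ a (b + c) * σ b c = C := by rw [hC]; linear_combination - hcyc a b c
    have h2 : σ b (c + a) * σ c a = C := by
      rw [hC]; linear_combination - hcyc b c a - hcyc a b c
    have h3 : σ c (a + b) * σ a b = C := by rw [hC]; ring
    rw [h1, h2, h3]
    have HJ := hjac hx hy hz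
    calc ε c a • C • br (α x) (br y z) + ε a b • C • br (α y) (br z x) +
          ε b c • C • br (α z) (br x y)
        = C • (ε c a • br (α x) (br y z) + ε a b • br (α y) (br z x) +
            ε b c • br (α z) (br x y)) := by
          rw [smul_add, smul_add, smul_comm C, smul_comm C, smul_comm C]
      _ = 0 := by rw [HJ, smul_zero]
  · intro a b c x y z hx hy hz
    rw [hμ' hy hz, hbr'' (hαev hx) (hμev hy hz),
      hbr' hx hy, map_smul, LinearMap.smul_apply,
      hμ' (hbrev hx hy) (hαev hz), smul_smul,
      hbr' hx hz, hμ'' (hαev hy) (hbrev hx hz) (σ a c),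
      hleib hx hy hz]
    set C := σ a (b + c) * σ b c with hC
    have h1 : σ a b * σ (a + b) c = C := by
      rw [hC, hsymm (a + b) c]; linear_combination hcyc a b c
    have h2 : σ b (a + c) * σ a c = C := by
      have e1 := hcyc a c b
      rw [hsymm c b, add_comm c b] at e1
      rw [hC]; linear_combination e1
    rw [h1, h2, smul_add, smul_comm C (ε a b)]
end

section
/- Let (P, ·, [·,·], ε, α) be a Hom-Poisson color algebra and let σ : G × G → K∖{0} be a multiplier on G with associated bicharacter δ(x,y) = σ(x,y)σ(y,x)^{-1}. Then (P, ∗^σ, [·,·]^σ, εδ, α) is also a Hom-Poisson color algebra, where for homogeneous x, y one sets x ∗^σ y = σ(x,y) x·y, [x,y]^σ = σ(x,y)[x,y], and (εδ)(x,y) = ε(x,y)σ(x,y)σ(y,x)^{-1} (σ being evaluated at the degrees of x and y). Moreover, any endomorphism of (P, ·, [·,·], ε, α) (an even linear map f with f∘α = α∘f, f(x·y) = f(x)·f(y) and f([x,y]) = [f(x), f(y)] for all homogeneous x, y) is also an endomorphism of (P, ∗^σ, [·,·]^σ, εδ, α). -/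
/-!
On homogeneous elements, twisting multiplies each side of every axiom by a product of values
of `σ` and `δ`. By the cocycle identity these factors agree on the two sides of
Hom-associativity and of the first Leibniz term; for the `εδ`-weighted terms of Leibniz and
Jacobi one needs the symmetry `σ(b,a) σ(b,c) σ(a,b+c) = σ(a,b) σ(a,c) σ(b,a+c)`, which follows
from two instances of the cocycle identity and makes the three Jacobi factors coincide.
-/

open scoped TensorProduct

variable {K G V : Type*} [Field K] [AddCommGroup G] [AddCommGroup V] [Module K V]

theorem IsBicharacter.of_mul_swap_of_add_right {ε : G → G → K}
    (hswap : ∀ a b, ε a b * ε b a = 1)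
    (hadd : ∀ a b c, ε a (b + c) = ε a b * ε a c) : IsBicharacter ε := by
  have hne : ∀ a b, ε a b ≠ 0 := fun a b => left_ne_zero_of_mul_eq_one (hswap a b)
  refine ⟨hne, hswap, hadd, fun a b c => ?_⟩
  have h := hswap (a + b) c
  rw [hadd] at h
  linear_combination ε a c * ε b c * h - ε (a + b) c * ε b c * ε c b * hswap a c -
    ε (a + b) c * hswap b c

theorem IsBicharacter.mul {ε δ : G → G → K} (hε : IsBicharacter ε) (hδ : IsBicharacter δ) :
    IsBicharacter fun a b => ε a b * δ a b := by
  refine .of_mul_swap_of_add_right (fun a b => ?_) (fun a b c => ?_)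
  · linear_combination δ a b * δ b a * hε.2.1 a b + hδ.2.1 a b
  · rw [hε.2.2.1, hδ.2.2.1]; ring

def IsMultiplier (σ : G → G → K) : Prop :=
  (∀ a b, σ a b ≠ 0) ∧ ∀ a b c, σ a (b + c) * σ b c = σ a b * σ (a + b) c

def multiplierBichar (σ : G → G → K) (a b : G) : K := σ a b * (σ b a)⁻¹

namespace IsMultiplier

variable {σ : G → G → K}

theorem mul_mul_add_comm (hσ : IsMultiplier σ) (a b c : G) :
    σ b a * σ b c * σ a (b + c) = σ a b * σ a c * σ b (a + c) := by
  have h₁ := hσ.2 a b c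
  have h₂ := hσ.2 b a c
  rw [add_comm b a] at h₂
  linear_combination σ b a * h₁ - σ a b * h₂

theorem multiplierBichar_mul (hσ : IsMultiplier σ) (a b : G) :
    multiplierBichar σ a b * σ b a = σ a b := by
  unfold multiplierBichar
  field_simp [hσ.1 b a]

theorem multiplierBichar_mul_mul_add (hσ : IsMultiplier σ) (a b c : G) :
    multiplierBichar σ a b * (σ a c * σ b (a + c)) = σ b c * σ a (b + c) := by
  unfold multiplierBichar
  field_simp [hσ.1 b a]
  linear_combination -(hσ.mul_mul_add_comm a b c)

theorem multiplierBichar_mul_mul_add_cyclic (hσ : IsMultiplier σ) (a b c : G) :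
    multiplierBichar σ c a * (σ b c * σ a (b + c)) =
      multiplierBichar σ a b * (σ c a * σ b (c + a)) := by
  unfold multiplierBichar
  field_simp [hσ.1 a c, hσ.1 b a]
  rw [add_comm c a]
  linear_combination σ c a * hσ.mul_mul_add_comm a b c

theorem isBicharacter_multiplierBichar (hσ : IsMultiplier σ) :
    IsBicharacter (multiplierBichar σ) := by
  refine .of_mul_swap_of_add_right (fun a b => ?_) (fun a b c => ?_)
  · unfold multiplierBichar
    field_simp [hσ.1 a b, hσ.1 b a]
  · have h := hσ.2 b c a
    rw [add_comm c a] at h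
    unfold multiplierBichar
    field_simp [hσ.1 b a, hσ.1 c a, hσ.1 (b + c) a]
    apply mul_right_cancel₀ (hσ.1 b c)
    linear_combination σ c a * hσ.mul_mul_add_comm a b c + σ a b * σ a c * h

end IsMultiplier

def IsTwist (ℬ : G → Submodule K V) (σ : G → G → K) (μ μ' : V →ₗ[K] V →ₗ[K] V) : Prop :=
  ∀ ⦃a b : G⦄ ⦃x y : V⦄, x ∈ ℬ a → y ∈ ℬ b → μ' x y = σ a b • μ x y

namespace IsTwist

variable {ℬ : G → Submodule K V} {σ : G → G → K} {μ μ' : V →ₗ[K] V →ₗ[K] V}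

theorem isEvenBilinear (ht : IsTwist ℬ σ μ μ') (hμ : IsEvenBilinear ℬ μ) :
    IsEvenBilinear ℬ μ' := fun _ _ _ _ hx hy => by
  rw [ht hx hy]
  exact Submodule.smul_mem _ _ (hμ hx hy)

omit [AddCommGroup G] in
theorem map_apply_of_map_apply (ht : IsTwist ℬ σ μ μ') {f : V →ₗ[K] V}
    (hf : IsEvenLinear ℬ f)
    (hfμ : ∀ ⦃a b : G⦄ ⦃x y : V⦄, x ∈ ℬ a → y ∈ ℬ b → f (μ x y) = μ (f x) (f y))
    ⦃a b : G⦄ ⦃x y : V⦄ (hx : x ∈ ℬ a) (hy : y ∈ ℬ b) : f (μ' x y) = μ' (f x) (f y) := by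
  rw [ht hx hy, map_smul, hfμ hx hy, ht (hf hx) (hf hy)]

end IsTwist

variable {ℬ : G → Submodule K V} {ε σ : G → G → K} {α : V →ₗ[K] V}

theorem IsHomAssociativeColor.twist {μ μ' : V →ₗ[K] V →ₗ[K] V}
    (hA : IsHomAssociativeColor ℬ ε μ α) (hσ : IsMultiplier σ) (ht : IsTwist ℬ σ μ μ') :
    IsHomAssociativeColor ℬ (fun a b => ε a b * multiplierBichar σ a b) μ' α := by
  obtain ⟨hε, hμ, hα, hassoc⟩ := hA
  refine ⟨hε.mul hσ.isBicharacter_multiplierBichar, ht.isEvenBilinear hμ, hα,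
    fun a b c x y z hx hy hz => ?_⟩
  rw [ht hy hz, map_smul, ht (hα hx) (hμ hy hz), ht hx hy, LinearMap.map_smul₂,
    ht (hμ hx hy) (hα hz)]
  linear_combination (norm := module)
    hσ.2 a b c • μ (μ x y) (α z) + (σ a (b + c) * σ b c) • hassoc hx hy hz

theorem IsHomLieColor.twist {br br' : V →ₗ[K] V →ₗ[K] V}
    (hL : IsHomLieColor ℬ ε br α) (hσ : IsMultiplier σ) (ht : IsTwist ℬ σ br br') :
    IsHomLieColor ℬ (fun a b => ε a b * multiplierBichar σ a b) br' α := by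
  obtain ⟨hε, hbr, hα, hskew, hjac⟩ := hL
  refine ⟨hε.mul hσ.isBicharacter_multiplierBichar, ht.isEvenBilinear hbr, hα,
    fun a b x y hx hy => ?_, fun a b c x y z hx hy hz => ?_⟩
  · rw [ht hx hy, ht hy hx, hskew hx hy]
    linear_combination (norm := module) (ε a b • hσ.multiplierBichar_mul a b) • br y x
  · rw [ht hy hz, map_smul, ht (hα hx) (hbr hy hz), ht hz hx, map_smul,
      ht (hα hy) (hbr hz hx), ht hx hy, map_smul, ht (hα hz) (hbr hx hy)]
    have h₁ := hσ.multiplierBichar_mul_mul_add_cyclic a b c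
    have h₂ := hσ.multiplierBichar_mul_mul_add_cyclic b c a
    linear_combination (norm := module)
      (multiplierBichar σ c a * (σ b c * σ a (b + c))) • hjac hx hy hz
        - (ε a b • h₁) • br (α y) (br z x) - (ε b c • (h₁.trans h₂)) • br (α z) (br x y)

theorem IsHomPoissonColor.twist {μ br μ' br' : V →ₗ[K] V →ₗ[K] V}
    (hP : IsHomPoissonColor ℬ ε μ br α) (hσ : IsMultiplier σ) (hμ' : IsTwist ℬ σ μ μ')
    (hbr' : IsTwist ℬ σ br br') :
    IsHomPoissonColor ℬ (fun a b => ε a b * multiplierBichar σ a b) μ' br' α := by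
  obtain ⟨hA, hL, hleib⟩ := hP
  refine ⟨hA.twist hσ hμ', hL.twist hσ hbr', fun a b c x y z hx hy hz => ?_⟩
  obtain ⟨-, hμ, hα, -⟩ := hA
  obtain ⟨-, hbr, -⟩ := hL
  rw [hμ' hy hz, map_smul, hbr' (hα hx) (hμ hy hz), hbr' hx hy, LinearMap.map_smul₂,
    hμ' (hbr hx hy) (hα hz), hbr' hx hz, map_smul, hμ' (hα hy) (hbr hx hz)]
  linear_combination (norm := module)
    (σ a (b + c) * σ b c) • hleib hx hy hz + hσ.2 a b c • μ (br x y) (α z)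
      - (ε a b • hσ.multiplierBichar_mul_mul_add a b c) • μ (α y) (br x z)

/-- twisting a Hom-Poisson color algebra by a multiplier `σ`,
replacing the bicharacter `ε` by `εδ` where `δ(x,y) = σ(x,y) σ(y,x)⁻¹`, yields a
Hom-Poisson color algebra; moreover every endomorphism of the original algebra
is an endomorphism of the twisted one. -/
theorem stmt3 (ℬ : G → Submodule K V) (ε : G → G → K)
    (μ br : V →ₗ[K] V →ₗ[K] V) (α : V →ₗ[K] V)
    (hP : IsHomPoissonColor ℬ ε μ br α)
    (σ : G → G → K) (hne : ∀ a b, σ a b ≠ 0)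
    (hmul : ∀ a b c, σ a (b + c) * σ b c = σ a b * σ (a + b) c)
    (μ' br' : V →ₗ[K] V →ₗ[K] V)
    (hμ' : ∀ ⦃a b : G⦄ ⦃x y : V⦄, x ∈ ℬ a → y ∈ ℬ b → μ' x y = σ a b • μ x y)
    (hbr' : ∀ ⦃a b : G⦄ ⦃x y : V⦄, x ∈ ℬ a → y ∈ ℬ b → br' x y = σ a b • br x y) :
    IsHomPoissonColor ℬ (fun a b => ε a b * (σ a b * (σ b a)⁻¹)) μ' br' α ∧
      ∀ f : V →ₗ[K] V, IsEvenLinear ℬ f → f.comp α = α.comp f →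
        (∀ ⦃a b : G⦄ ⦃x y : V⦄, x ∈ ℬ a → y ∈ ℬ b → f (μ x y) = μ (f x) (f y)) →
        (∀ ⦃a b : G⦄ ⦃x y : V⦄, x ∈ ℬ a → y ∈ ℬ b → f (br x y) = br (f x) (f y)) →
        (f.comp α = α.comp f ∧
          (∀ ⦃a b : G⦄ ⦃x y : V⦄, x ∈ ℬ a → y ∈ ℬ b →
            f (μ' x y) = μ' (f x) (f y)) ∧
          (∀ ⦃a b : G⦄ ⦃x y : V⦄, x ∈ ℬ a → y ∈ ℬ b →
            f (br' x y) = br' (f x) (f y))) :=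
  ⟨hP.twist ⟨hne, hmul⟩ hμ' hbr', fun _ hf hfα hfμ hfbr =>
    ⟨hfα, IsTwist.map_apply_of_map_apply hμ' hf hfμ,
      IsTwist.map_apply_of_map_apply hbr' hf hfbr⟩⟩
end

section
/- Let (P, ·, [·,·], ε, α) be a Hom-Poisson color algebra and let β : P → P be an element of the α⁰-centroid of P, i.e. an even linear map with β∘α = α∘β, β(x·y) = β(x)·y = x·β(y), and β([x,y]) = [β(x), y] for all homogeneous x, y. Define new operations by x ∗ y = x·y and {x,y} = [β(x), y] for homogeneous x, y. Then (P, ∗, {·,·}, ε, α) is also a Hom-Poisson color algebra. -/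
open scoped TensorProduct

variable {K G V : Type*} [Field K] [AddCommGroup G] [AddCommGroup V] [Module K V]

/-- twisting the bracket of a Hom-Poisson color algebra by an
element `β` of the `α⁰`-centroid, via `{x, y} = [β(x), y]` (the multiplication
being unchanged), yields a Hom-Poisson color algebra. -/
theorem stmt5 (ℬ : G → Submodule K V) (ε : G → G → K)
    (μ br : V →ₗ[K] V →ₗ[K] V) (α : V →ₗ[K] V)
    (hP : IsHomPoissonColor ℬ ε μ br α)
    (β : V →ₗ[K] V) (hβeven : IsEvenLinear ℬ β)
    (hβα : β.comp α = α.comp β)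
    (hcentμ : ∀ ⦃a b : G⦄ ⦃x y : V⦄, x ∈ ℬ a → y ∈ ℬ b →
      β (μ x y) = μ (β x) y ∧ μ (β x) y = μ x (β y))
    (hcentbr : ∀ ⦃a b : G⦄ ⦃x y : V⦄, x ∈ ℬ a → y ∈ ℬ b →
      β (br x y) = br (β x) y) :
    IsHomPoissonColor ℬ ε μ (br.comp β) α := by
  obtain ⟨hassoc, ⟨hchar, hbil, heven, hskew, hjac⟩, hleib⟩ := hP
  have hβα' : ∀ x, β (α x) = α (β x) := fun x => LinearMap.congr_fun hβα x
  -- β on the right of br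
  have hcentbr' : ∀ ⦃a b : G⦄ ⦃x y : V⦄, x ∈ ℬ a → y ∈ ℬ b →
      β (br x y) = br x (β y) := by
    intro a b x y hx hy
    have h1 : br x (β y) = -(ε a b • br (β y) x) := hskew hx (hβeven hy)
    rw [h1, ← hcentbr hy hx, ← map_smul, ← map_neg, ← hskew hx hy]
  refine ⟨hassoc, ⟨hchar, ?_, heven, ?_, ?_⟩, ?_⟩
  · intro a b x y hx hy
    exact hbil (hβeven hx) hy
  · intro a b x y hx hy
    simp only [LinearMap.comp_apply]
    rw [← hcentbr hx hy, hskew hx hy, map_neg, map_smul, hcentbr hy hx]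
  · intro a b c x y z hx hy hz
    simp only [LinearMap.comp_apply]
    have e1 : br (α (β x)) (br (β y) z) = β (β (br (α x) (br y z))) := by
      rw [← hcentbr hy hz,
        ← hcentbr' (heven (hβeven hx)) (hbil hy hz), ← hβα',
        ← hcentbr (heven hx) (hbil hy hz)]
    have e2 : br (α (β y)) (br (β z) x) = β (β (br (α y) (br z x))) := by
      rw [← hcentbr hz hx,
        ← hcentbr' (heven (hβeven hy)) (hbil hz hx), ← hβα',
        ← hcentbr (heven hy) (hbil hz hx)]
    have e3 : br (α (β z)) (br (β x) y) = β (β (br (α z) (br x y))) := by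
      rw [← hcentbr hx hy,
        ← hcentbr' (heven (hβeven hz)) (hbil hx hy), ← hβα',
        ← hcentbr (heven hz) (hbil hx hy)]
    rw [hβα' x, hβα' y, hβα' z, e1, e2, e3]
    have h0 := hjac hx hy hz
    calc ε c a • β (β (br (α x) (br y z))) + ε a b • β (β (br (α y) (br z x))) +
          ε b c • β (β (br (α z) (br x y)))
        = β (β (ε c a • br (α x) (br y z) + ε a b • br (α y) (br z x) +
            ε b c • br (α z) (br x y))) := by simp only [map_add, map_smul]
      _ = 0 := by rw [h0, map_zero, map_zero]
  · intro a b c x y z hx hy hz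
    simp only [LinearMap.comp_apply]
    rw [hβα' x]
    exact hleib (hβeven hx) hy hz
end

section
/- Let (P, ·, [·,·], ε, α) be a Hom-Poisson color algebra and let β : P → P be an α⁰-averaging operator, i.e. an even linear map with β∘α = α∘β, β(β(x)·y) = β(x)·β(y) = β(x·β(y)), and [β(x), β(y)] = β([β(x), y]) for all homogeneous x, y. Define new operations by x ∗ y = β(x)·β(y) and {x,y} = [β(x), β(y)] for homogeneous x, y. Then (P, ∗, {·,·}, ε, α) is a Hom-Poisson color algebra. -/
open scoped TensorProduct

variable {K G V : Type*} [Field K] [AddCommGroup G] [AddCommGroup V] [Module K V]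

/-- twisting a Hom-Poisson color algebra by an `α⁰`-averaging
operator `β`, via `x ∗ y = β(x)·β(y)` and `{x, y} = [β(x), β(y)]`, yields a
Hom-Poisson color algebra. -/
theorem stmt6 (ℬ : G → Submodule K V) (ε : G → G → K)
    (μ br : V →ₗ[K] V →ₗ[K] V) (α : V →ₗ[K] V)
    (hP : IsHomPoissonColor ℬ ε μ br α)
    (β : V →ₗ[K] V) (hβeven : IsEvenLinear ℬ β)
    (hβα : β.comp α = α.comp β)
    (havμ : ∀ ⦃a b : G⦄ ⦃x y : V⦄, x ∈ ℬ a → y ∈ ℬ b →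
      β (μ (β x) y) = μ (β x) (β y) ∧ μ (β x) (β y) = β (μ x (β y)))
    (havbr : ∀ ⦃a b : G⦄ ⦃x y : V⦄, x ∈ ℬ a → y ∈ ℬ b →
      br (β x) (β y) = β (br (β x) y)) :
    IsHomPoissonColor ℬ ε ((μ.comp β).compl₂ β) ((br.comp β).compl₂ β) α := by
  obtain ⟨⟨hbc, hμbil, hαev, hassoc⟩, ⟨_, hbrbil, _, hskew, hjac⟩, hleib⟩ := hP
  have hβα' : ∀ x, β (α x) = α (β x) := fun x => congrFun (congrArg DFunLike.coe hβα) x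
  have h1 : ∀ ⦃a b : G⦄ ⦃x y : V⦄, x ∈ ℬ a → y ∈ ℬ b →
      β (μ (β x) y) = μ (β x) (β y) := fun a b x y hx hy => (havμ hx hy).1
  have h2 : ∀ ⦃a b : G⦄ ⦃x y : V⦄, x ∈ ℬ a → y ∈ ℬ b →
      β (μ x (β y)) = μ (β x) (β y) := fun a b x y hx hy => ((havμ hx hy).2).symm
  refine ⟨⟨hbc, ?_, hαev, ?_⟩, ⟨hbc, ?_, hαev, ?_, ?_⟩, ?_⟩
  · intro a b x y hx hy
    simpa using hμbil (hβeven hx) (hβeven hy)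
  · intro a b c x y z hx hy hz
    have hW : μ (β y) (β z) ∈ ℬ (b + c) := hμbil (hβeven hy) (hβeven hz)
    have hW' : μ (β x) (β y) ∈ ℬ (a + b) := hμbil (hβeven hx) (hβeven hy)
    simp only [LinearMap.compl₂_apply, LinearMap.comp_apply]
    calc μ (β (α x)) (β (μ (β y) (β z)))
        = β (μ (β (α x)) (μ (β y) (β z))) := (h1 (hαev hx) hW).symm
      _ = β (μ (α (β x)) (μ (β y) (β z))) := by rw [hβα']
      _ = β (μ (μ (β x) (β y)) (α (β z))) := by
          rw [hassoc (hβeven hx) (hβeven hy) (hβeven hz)]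
      _ = β (μ (μ (β x) (β y)) (β (α z))) := by rw [hβα']
      _ = μ (β (μ (β x) (β y))) (β (α z)) := h2 hW' (hαev hz)
  · intro a b x y hx hy
    simpa using hbrbil (hβeven hx) (hβeven hy)
  · intro a b x y hx hy
    simpa using hskew (hβeven hx) (hβeven hy)
  · intro a b c x y z hx hy hz
    simp only [LinearMap.compl₂_apply, LinearMap.comp_apply]
    rw [havbr (hαev hx) (hbrbil (hβeven hy) (hβeven hz)),
        havbr (hαev hy) (hbrbil (hβeven hz) (hβeven hx)),
        havbr (hαev hz) (hbrbil (hβeven hx) (hβeven hy)),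
        hβα', hβα', hβα', ← β.map_smul (ε c a), ← β.map_smul (ε a b), ← β.map_smul (ε b c), ← β.map_add, ← β.map_add,
        hjac (hβeven hx) (hβeven hy) (hβeven hz), map_zero]
  · intro a b c x y z hx hy hz
    simp only [LinearMap.compl₂_apply, LinearMap.comp_apply]
    rw [havbr (hαev hx) (hμbil (hβeven hy) (hβeven hz)), hβα',
        hleib (hβeven hx) (hβeven hy) (hβeven hz), map_add, map_smul,
        ← hβα' z, ← hβα' y,
        h2 (hbrbil (hβeven hx) (hβeven hy)) (hαev hz),
        h1 (hαev hy) (hbrbil (hβeven hx) (hβeven hz))]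
end

section
/- Let (P, ·, [·,·], ε, α) be a Hom-Poisson color algebra, k a nonnegative integer, and β : P → P a bijective α^k-averaging operator, i.e. an even bijective linear map with β∘α = α∘β, β(β(x)·α^k(y)) = β(x)·β(y) = β(α^k(x)·β(y)), and [β(x), β(y)] = β([β(x), α^k(y)]) for all homogeneous x, y. Define new operations by x ∗ y = β(x)·α^k(y) and {x,y} = [β(x), α^k(y)] for homogeneous x, y. Then (P, ∗, {·,·}, ε, α) is a Hom-Poisson color algebra; moreover, β is a morphism of Hom-Poisson color algebras from (P, ∗, {·,·}, ε, α) onto (P, ·, [·,·], ε, α), i.e. β(x ∗ y) = β(x)·β(y), β({x,y}) = [β(x), β(y)], and β∘α = α∘β. -/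
open scoped TensorProduct

variable {K G V : Type*} [Field K] [AddCommGroup G] [AddCommGroup V] [Module K V]

/-- twisting a Hom-Poisson color algebra by a bijective
`αᵏ`-averaging operator `β`, via `x ∗ y = β(x)·αᵏ(y)` and
`{x, y} = [β(x), αᵏ(y)]`, yields a Hom-Poisson color algebra, and `β` is a
morphism from the twisted algebra onto the original one. -/
theorem stmt8 (ℬ : G → Submodule K V) (ε : G → G → K)
    (μ br : V →ₗ[K] V →ₗ[K] V) (α : V →ₗ[K] V)
    (hP : IsHomPoissonColor ℬ ε μ br α)
    (k : ℕ) (β : V →ₗ[K] V) (hbij : Function.Bijective β)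
    (hβeven : IsEvenLinear ℬ β)
    (hβα : β.comp α = α.comp β)
    (havμ : ∀ ⦃a b : G⦄ ⦃x y : V⦄, x ∈ ℬ a → y ∈ ℬ b →
      β (μ (β x) ((α ^ k) y)) = μ (β x) (β y) ∧
        μ (β x) (β y) = β (μ ((α ^ k) x) (β y)))
    (havbr : ∀ ⦃a b : G⦄ ⦃x y : V⦄, x ∈ ℬ a → y ∈ ℬ b →
      br (β x) (β y) = β (br (β x) ((α ^ k) y))) :
    IsHomPoissonColor ℬ ε ((μ.comp β).compl₂ (α ^ k))
        ((br.comp β).compl₂ (α ^ k)) α ∧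
      (∀ ⦃a b : G⦄ ⦃x y : V⦄, x ∈ ℬ a → y ∈ ℬ b →
        β (((μ.comp β).compl₂ (α ^ k)) x y) = μ (β x) (β y)) ∧
      (∀ ⦃a b : G⦄ ⦃x y : V⦄, x ∈ ℬ a → y ∈ ℬ b →
        β (((br.comp β).compl₂ (α ^ k)) x y) = br (β x) (β y)) ∧
      β.comp α = α.comp β := by
  obtain ⟨⟨hε, hμev, hαev, hassoc⟩, ⟨-, hbrev, -, hskew, hjac⟩, hleib⟩ := hP
  have hinj := hbij.injective
  have hβα' : ∀ x, β (α x) = α (β x) := fun x => LinearMap.congr_fun hβα x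
  have hAk : ∀ n : ℕ, IsEvenLinear ℬ (α ^ n) := by
    intro n
    induction n with
    | zero => intro a x hx; simpa using hx
    | succ n ih =>
      intro a x hx
      rw [pow_succ, Module.End.mul_apply]
      exact ih (hαev hx)
  have hμ'β : ∀ ⦃a b : G⦄ ⦃x y : V⦄, x ∈ ℬ a → y ∈ ℬ b →
      β (μ (β x) ((α ^ k) y)) = μ (β x) (β y) := fun _ _ _ _ h1 h2 => (havμ h1 h2).1
  have hbr'β : ∀ ⦃a b : G⦄ ⦃x y : V⦄, x ∈ ℬ a → y ∈ ℬ b →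
      β (br (β x) ((α ^ k) y)) = br (β x) (β y) := fun _ _ _ _ h1 h2 => (havbr h1 h2).symm
  refine ⟨⟨⟨hε, ?_, hαev, ?_⟩, ⟨hε, ?_, hαev, ?_, ?_⟩, ?_⟩, ?_, ?_, hβα⟩
  · -- evenness of twisted μ
    intro a b x y hx hy
    simp only [LinearMap.compl₂_apply, LinearMap.comp_apply]
    exact hμev (hβeven hx) (hAk k hy)
  · -- hom-associativity
    intro a b c x y z hx hy hz
    apply hinj
    simp only [LinearMap.compl₂_apply, LinearMap.comp_apply]
    rw [hμ'β (hαev hx) (hμev (hβeven hy) (hAk k hz)),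
      hμ'β (hμev (hβeven hx) (hAk k hy)) (hαev hz),
      hμ'β hy hz, hμ'β hx hy, hβα' x, hβα' z]
    exact hassoc (hβeven hx) (hβeven hy) (hβeven hz)
  · -- evenness of twisted bracket
    intro a b x y hx hy
    simp only [LinearMap.compl₂_apply, LinearMap.comp_apply]
    exact hbrev (hβeven hx) (hAk k hy)
  · -- skew-symmetry
    intro a b x y hx hy
    apply hinj
    simp only [LinearMap.compl₂_apply, LinearMap.comp_apply]
    rw [hbr'β hx hy, map_neg, map_smul, hbr'β hy hx]
    exact hskew (hβeven hx) (hβeven hy)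
  · -- Jacobi identity
    intro a b c x y z hx hy hz
    apply hinj
    simp only [LinearMap.compl₂_apply, LinearMap.comp_apply, map_add, map_smul, map_zero]
    rw [hbr'β (hαev hx) (hbrev (hβeven hy) (hAk k hz)),
      hbr'β (hαev hy) (hbrev (hβeven hz) (hAk k hx)),
      hbr'β (hαev hz) (hbrev (hβeven hx) (hAk k hy)),
      hbr'β hy hz, hbr'β hz hx, hbr'β hx hy, hβα' x, hβα' y, hβα' z]
    exact hjac (hβeven hx) (hβeven hy) (hβeven hz)
  · -- Leibniz identity
    intro a b c x y z hx hy hz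
    apply hinj
    simp only [LinearMap.compl₂_apply, LinearMap.comp_apply, map_add, map_smul]
    rw [hbr'β (hαev hx) (hμev (hβeven hy) (hAk k hz)),
      hμ'β (hbrev (hβeven hx) (hAk k hy)) (hαev hz),
      hμ'β (hαev hy) (hbrev (hβeven hx) (hAk k hz)),
      hμ'β hy hz, hbr'β hx hy, hbr'β hx hz, hβα' x, hβα' y, hβα' z]
    exact hleib (hβeven hx) (hβeven hy) (hβeven hz)
  · intro a b x y hx hy
    simp only [LinearMap.compl₂_apply, LinearMap.comp_apply]
    exact (havμ hx hy).1
  · intro a b x y hx hy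
    simp only [LinearMap.compl₂_apply, LinearMap.comp_apply]
    exact (havbr hx hy).symm
end

section
/- Let (P, ·, [·,·], ε, α) be a Hom-Poisson color algebra and let R : P → P be a Rota-Baxter operator of weight λ ∈ K on P, i.e. an even linear map with R∘α = α∘R, R(x)·R(y) = R(R(x)·y + x·R(y) + λ x·y), and [R(x), R(y)] = R([R(x), y] + [x, R(y)] + λ[x,y]) for all homogeneous x, y. Define new operations by x ∗ y = R(x)·y + x·R(y) + λ x·y and {x,y} = [R(x), y] + [x, R(y)] + λ[x,y] for homogeneous x, y. Then (P, ∗, {·,·}, ε, α) is a Hom-Poisson color algebra; moreover, R is a morphism of Hom-Poisson color algebras from (P, ∗, {·,·}, ε, α) onto (P, ·, [·,·], ε, α), i.e. R(x ∗ y) = R(x)·R(y), R({x,y}) = [R(x), R(y)], and R∘α = α∘R. -/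
open scoped TensorProduct

variable {K G V : Type*} [Field K] [AddCommGroup G] [AddCommGroup V] [Module K V]

/-- twisting a Hom-Poisson color algebra by a Rota-Baxter operator
`R` of weight `λ`, via `x ∗ y = R(x)·y + x·R(y) + λ x·y` and
`{x, y} = [R(x), y] + [x, R(y)] + λ [x, y]`, yields a Hom-Poisson color
algebra, and `R` is a morphism from the twisted algebra onto the original one. -/
theorem stmt10 (ℬ : G → Submodule K V) (ε : G → G → K)
    (μ br : V →ₗ[K] V →ₗ[K] V) (α : V →ₗ[K] V)
    (hP : IsHomPoissonColor ℬ ε μ br α)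
    (lam : K) (R : V →ₗ[K] V) (hReven : IsEvenLinear ℬ R)
    (hRα : R.comp α = α.comp R)
    (hRμ : ∀ ⦃a b : G⦄ ⦃x y : V⦄, x ∈ ℬ a → y ∈ ℬ b →
      μ (R x) (R y) = R (μ (R x) y + μ x (R y) + lam • μ x y))
    (hRbr : ∀ ⦃a b : G⦄ ⦃x y : V⦄, x ∈ ℬ a → y ∈ ℬ b →
      br (R x) (R y) = R (br (R x) y + br x (R y) + lam • br x y)) :
    IsHomPoissonColor ℬ ε (μ.comp R + μ.compl₂ R + lam • μ)
        (br.comp R + br.compl₂ R + lam • br) α ∧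
      (∀ ⦃a b : G⦄ ⦃x y : V⦄, x ∈ ℬ a → y ∈ ℬ b →
        R ((μ.comp R + μ.compl₂ R + lam • μ) x y) = μ (R x) (R y)) ∧
      (∀ ⦃a b : G⦄ ⦃x y : V⦄, x ∈ ℬ a → y ∈ ℬ b →
        R ((br.comp R + br.compl₂ R + lam • br) x y) = br (R x) (R y)) ∧
      R.comp α = α.comp R := by

  obtain ⟨⟨hbich, hμev, hαev, hassoc⟩, ⟨_, hbrev, _, hskew, hjac⟩, hleib⟩ := hP
  have hc : ∀ v, R (α v) = α (R v) := fun v => LinearMap.congr_fun hRα v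
  refine ⟨⟨⟨hbich, ?_, hαev, ?_⟩, ⟨hbich, ?_, hαev, ?_, ?_⟩, ?_⟩, ?_, ?_, hRα⟩
  · intro a b x y hx hy
    simp only [LinearMap.add_apply, LinearMap.comp_apply, LinearMap.compl₂_apply,
      LinearMap.smul_apply]
    exact add_mem (add_mem (hμev (hReven hx) hy) (hμev hx (hReven hy)))
      (Submodule.smul_mem _ _ (hμev hx hy))
  · intro a b c x y z hx hy hz
    have h1 := hassoc (hReven hx) (hReven hy) hz
    have h2 := hassoc (hReven hx) hy (hReven hz)
    have h3 := hassoc (hReven hx) hy hz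
    have h4 := hassoc hx (hReven hy) (hReven hz)
    have h5 := hassoc hx (hReven hy) hz
    have h6 := hassoc hx hy (hReven hz)
    have h7 := hassoc hx hy hz
    simp only [LinearMap.add_apply, LinearMap.comp_apply, LinearMap.compl₂_apply,
      LinearMap.smul_apply]
    rw [← hRμ hy hz, ← hRμ hx hy, hc x, hc z]
    simp only [map_add, map_smul, LinearMap.add_apply, LinearMap.smul_apply]
    linear_combination (norm := module) h1 + h2 + h4 + lam • (h3 + h5 + h6) +
      (lam * lam) • h7
  · intro a b x y hx hy
    simp only [LinearMap.add_apply, LinearMap.comp_apply, LinearMap.compl₂_apply,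
      LinearMap.smul_apply]
    exact add_mem (add_mem (hbrev (hReven hx) hy) (hbrev hx (hReven hy)))
      (Submodule.smul_mem _ _ (hbrev hx hy))
  · intro a b x y hx hy
    have h1 := hskew (hReven hx) hy
    have h2 := hskew hx (hReven hy)
    have h3 := hskew hx hy
    simp only [LinearMap.add_apply, LinearMap.comp_apply, LinearMap.compl₂_apply,
      LinearMap.smul_apply]
    linear_combination (norm := module) h1 + h2 + lam • h3
  · intro a b c x y z hx hy hz
    have j1 := hjac (hReven hx) (hReven hy) hz
    have j2 := hjac (hReven hx) hy (hReven hz)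
    have j3 := hjac hx (hReven hy) (hReven hz)
    have j4 := hjac (hReven hx) hy hz
    have j5 := hjac hx (hReven hy) hz
    have j6 := hjac hx hy (hReven hz)
    have j7 := hjac hx hy hz
    simp only [LinearMap.add_apply, LinearMap.comp_apply, LinearMap.compl₂_apply,
      LinearMap.smul_apply]
    rw [← hRbr hy hz, ← hRbr hz hx, ← hRbr hx hy, hc x, hc y, hc z]
    simp only [map_add, map_smul, LinearMap.add_apply, LinearMap.smul_apply]
    linear_combination (norm := module) j1 + j2 + j3 + lam • (j4 + j5 + j6) +
      (lam * lam) • j7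
  · intro a b c x y z hx hy hz
    have l1 := hleib (hReven hx) (hReven hy) hz
    have l2 := hleib (hReven hx) hy (hReven hz)
    have l3 := hleib hx (hReven hy) (hReven hz)
    have l4 := hleib (hReven hx) hy hz
    have l5 := hleib hx (hReven hy) hz
    have l6 := hleib hx hy (hReven hz)
    have l7 := hleib hx hy hz
    simp only [LinearMap.add_apply, LinearMap.comp_apply, LinearMap.compl₂_apply,
      LinearMap.smul_apply]
    rw [← hRμ hy hz, ← hRbr hx hy, ← hRbr hx hz, hc x, hc y, hc z]
    simp only [map_add, map_smul, LinearMap.add_apply, LinearMap.smul_apply]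
    linear_combination (norm := module) l1 + l2 + l3 + lam • (l4 + l5 + l6) +
      (lam * lam) • l7
  · intro a b x y hx hy
    simp only [LinearMap.add_apply, LinearMap.comp_apply, LinearMap.compl₂_apply,
      LinearMap.smul_apply]
    exact (hRμ hx hy).symm
  · intro a b x y hx hy
    simp only [LinearMap.add_apply, LinearMap.comp_apply, LinearMap.compl₂_apply,
      LinearMap.smul_apply]
    exact (hRbr hx hy).symm
end

section
/- Let (A, ·, ε, α_A) be a commutative Hom-associative color algebra (i.e. a Hom-associative color algebra with a·b = ε(a,b) b·a for all homogeneous a, b) and let (P, ∗, [·,·], ε, α_P) be a Hom-Poisson color algebra, both graded by the same abelian group G with the same bicharacter ε. Then the tensor product A ⊗ P, graded by (A ⊗ P)_g = ⊕_{a+x=g} A_a ⊗ P_x, is a Hom-Poisson color algebra with the even linear map α(a ⊗ x) = α_A(a) ⊗ α_P(x), the multiplication (a ⊗ x)(b ⊗ y) = ε(x,b) (a·b) ⊗ (x ∗ y), and the bracket {a ⊗ x, b ⊗ y} = ε(x,b) (a·b) ⊗ [x,y], for all homogeneous a, b ∈ A and x, y ∈ P (where ε(x,b) is evaluated at the degrees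 of x and b). -/
open scoped TensorProduct

variable {K G V : Type*} [Field K] [AddCommGroup G] [AddCommGroup V] [Module K V]

/-!
All structure maps of `A ⊗ P` are multilinear, and the graded piece `(A ⊗ P)_g` is spanned by
the tensors `a ⊗ x` with `a`, `x` homogeneous of total degree `g`; so every axiom need only be
checked on such pure tensors. There it factors into the corresponding axiom of `P` tensored with
an element of `A`, up to a product of values of `ε`. Commutativity and Hom-associativity of `A`
bring the `A`-factors of all terms of the Jacobi and Leibniz identities to the common element
`αA a · (b · c)`, and the remaining `ε`-factors match by the bicharacter rules.
-/

namespace IsBicharacter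

variable {ε : G → G → K}

theorem ne_zero (hε : IsBicharacter ε) (a b : G) : ε a b ≠ 0 := hε.1 a b

theorem swap_eq_inv (hε : IsBicharacter ε) (a b : G) : ε b a = (ε a b)⁻¹ :=
  eq_inv_of_mul_eq_one_right (hε.2.1 a b)

theorem map_add_right (hε : IsBicharacter ε) (a b c : G) : ε a (b + c) = ε a b * ε a c :=
  hε.2.2.1 a b c

theorem map_add_left (hε : IsBicharacter ε) (a b c : G) : ε (a + b) c = ε a c * ε b c :=
  hε.2.2.2 a b c

end IsBicharacter

section Span

variable {R W M : Type*} [Semiring R] [AddCommMonoid W] [Module R W] [AddCommMonoid M]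
  [Module R M] {s₁ s₂ s₃ : Set W}

theorem IsLinearMap.eq_zero_of_mem_span {f : W → M} (hf : IsLinearMap R f)
    (h : ∀ t ∈ s₁, f t = 0) {t : W} (ht : t ∈ Submodule.span R s₁) : f t = 0 :=
  LinearMap.eqOn_span (f := hf.mk' f) (g := 0) h ht

theorem eq_zero_of_mem_span₂ (Φ : W → W → M) (hΦ : ∀ t ∈ s₁, ∀ u ∈ s₂, Φ t u = 0)
    (h₁ : ∀ u, IsLinearMap R (Φ · u)) (h₂ : ∀ t, IsLinearMap R (Φ t))
    {t u : W} (ht : t ∈ Submodule.span R s₁) (hu : u ∈ Submodule.span R s₂) : Φ t u = 0 :=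
  (h₁ u).eq_zero_of_mem_span (fun t' ht' => (h₂ t').eq_zero_of_mem_span (hΦ t' ht') hu) ht

theorem eq_zero_of_mem_span₃ (Φ : W → W → W → M)
    (hΦ : ∀ t ∈ s₁, ∀ u ∈ s₂, ∀ v ∈ s₃, Φ t u v = 0) (h₁ : ∀ u v, IsLinearMap R (Φ · u v))
    (h₂ : ∀ t v, IsLinearMap R (Φ t · v)) (h₃ : ∀ t u, IsLinearMap R (Φ t u)) {t u v : W}
    (ht : t ∈ Submodule.span R s₁) (hu : u ∈ Submodule.span R s₂)
    (hv : v ∈ Submodule.span R s₃) : Φ t u v = 0 :=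
  (h₁ u v).eq_zero_of_mem_span (fun t' ht' =>
    eq_zero_of_mem_span₂ (Φ t') (hΦ t' ht') (h₂ t') (h₃ t') hu hv) ht

end Span

def IsColorCommutative (ℬ : G → Submodule K V) (ε : G → G → K) (μ : V →ₗ[K] V →ₗ[K] V) : Prop :=
  ∀ ⦃a b : G⦄ ⦃x y : V⦄, x ∈ ℬ a → y ∈ ℬ b → μ x y = ε a b • μ y x

theorem IsHomAssociativeColor.left_comm {ℬ : G → Submodule K V} {ε : G → G → K}
    {μ : V →ₗ[K] V →ₗ[K] V} {α : V →ₗ[K] V} (h : IsHomAssociativeColor ℬ ε μ α)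
    (hcomm : IsColorCommutative ℬ ε μ)
    {a b c : G} {x y z : V} (hx : x ∈ ℬ a) (hy : y ∈ ℬ b) (hz : z ∈ ℬ c) :
    μ (α y) (μ x z) = ε b a • μ (α x) (μ y z) := by
  rw [h.2.2.2 hy hx hz, hcomm hy hx, map_smul, LinearMap.smul_apply, h.2.2.2 hx hy hz]

section TensorGrading

open Submodule TensorProduct

variable {A P : Type*} [AddCommGroup A] [Module K A] [AddCommGroup P] [Module K P]
  (ℬA : G → Submodule K A) (ℬP : G → Submodule K P)

def tensorGrading (g : G) : Submodule K (A ⊗[K] P) :=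
  ⨆ p : {p : G × G // p.1 + p.2 = g}, map₂ (TensorProduct.mk K A P) (ℬA p.1.1) (ℬP p.1.2)

def homogeneousTmuls (g : G) : Set (A ⊗[K] P) :=
  {t | ∃ p q, p + q = g ∧ ∃ a ∈ ℬA p, ∃ x ∈ ℬP q, a ⊗ₜ[K] x = t}

theorem tensorGrading_eq_span (g : G) :
    tensorGrading ℬA ℬP g = span K (homogeneousTmuls ℬA ℬP g) := by
  simp only [tensorGrading, map₂_eq_span_image2, iSup_span]
  congr 1
  ext t
  simp [homogeneousTmuls, Set.image2]

theorem tmul_mem_tensorGrading {p q : G} {a : A} {x : P} (ha : a ∈ ℬA p) (hx : x ∈ ℬP q) :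
    a ⊗ₜ[K] x ∈ tensorGrading ℬA ℬP (p + q) :=
  tensorGrading_eq_span ℬA ℬP _ ▸ subset_span ⟨p, q, rfl, a, ha, x, hx, rfl⟩

variable {ℬA ℬP}

def IsColorTensorProduct (ℬA : G → Submodule K A) (ℬP : G → Submodule K P) (ε : G → G → K)
    (fA : A →ₗ[K] A →ₗ[K] A) (fP : P →ₗ[K] P →ₗ[K] P)
    (f : (A ⊗[K] P) →ₗ[K] (A ⊗[K] P) →ₗ[K] (A ⊗[K] P)) : Prop :=
  ∀ ⦃ga gx gb gy : G⦄ ⦃a b : A⦄ ⦃x y : P⦄,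
    a ∈ ℬA ga → x ∈ ℬP gx → b ∈ ℬA gb → y ∈ ℬP gy →
      f (a ⊗ₜ[K] x) (b ⊗ₜ[K] y) = ε gx gb • (fA a b ⊗ₜ[K] fP x y)

theorem IsEvenLinear.tensorProductMap {αA : A →ₗ[K] A} {αP : P →ₗ[K] P}
    (hA : IsEvenLinear ℬA αA) (hP : IsEvenLinear ℬP αP) :
    IsEvenLinear (tensorGrading ℬA ℬP) (map αA αP) := by
  intro g t ht
  rw [tensorGrading_eq_span] at ht
  refine mem_comap.mp ((span_le (p := comap (map αA αP) (tensorGrading ℬA ℬP g))).mpr ?_ ht)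
  rintro _ ⟨p, q, rfl, a, ha, x, hx, rfl⟩
  exact tmul_mem_tensorGrading ℬA ℬP (hA ha) (hP hx)

theorem IsColorTensorProduct.isEvenBilinear {ε : G → G → K} {fA : A →ₗ[K] A →ₗ[K] A}
    {fP : P →ₗ[K] P →ₗ[K] P} {f : (A ⊗[K] P) →ₗ[K] (A ⊗[K] P) →ₗ[K] (A ⊗[K] P)}
    (hf : IsColorTensorProduct ℬA ℬP ε fA fP f) (hA : IsEvenBilinear ℬA fA)
    (hP : IsEvenBilinear ℬP fP) : IsEvenBilinear (tensorGrading ℬA ℬP) f := by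
  intro ga gb t u ht hu
  rw [tensorGrading_eq_span] at ht hu
  refine (span_le.mpr ?_) (map₂_span_span K f _ _ ▸ apply_mem_map₂ f ht hu)
  rintro _ ⟨_, ⟨p₁, p₂, rfl, a, ha, x, hx, rfl⟩, _, ⟨q₁, q₂, rfl, b, hb, y, hy, rfl⟩, rfl⟩
  dsimp only
  rw [hf ha hx hb hy, add_add_add_comm]
  exact smul_mem _ _ (tmul_mem_tensorGrading ℬA ℬP (hA ha hb) (hP hx hy))

end TensorGrading

section TensorAlgebra

open Submodule TensorProduct

variable {A P : Type*} [AddCommGroup A] [Module K A] [AddCommGroup P] [Module K P]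
  {ℬA : G → Submodule K A} {ℬP : G → Submodule K P} {ε : G → G → K}
  {μA : A →ₗ[K] A →ₗ[K] A} {αA : A →ₗ[K] A} {μP brP : P →ₗ[K] P →ₗ[K] P} {αP : P →ₗ[K] P}
  {m br : (A ⊗[K] P) →ₗ[K] (A ⊗[K] P) →ₗ[K] (A ⊗[K] P)}

theorem IsHomAssociativeColor.tensorProduct (hA : IsHomAssociativeColor ℬA ε μA αA)
    (hP : IsHomAssociativeColor ℬP ε μP αP) (hm : IsColorTensorProduct ℬA ℬP ε μA μP m) :
    IsHomAssociativeColor (tensorGrading ℬA ℬP) ε m (map αA αP) := by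
  obtain ⟨hε, hAμ, hAα, hAassoc⟩ := hA
  obtain ⟨-, hPμ, hPα, hPassoc⟩ := hP
  refine ⟨hε, hm.isEvenBilinear hAμ hPμ, hAα.tensorProductMap hPα, ?_⟩
  intro ga gb gc t u v ht hu hv
  rw [tensorGrading_eq_span] at ht hu hv
  rw [← sub_eq_zero]
  refine eq_zero_of_mem_span₃
    (fun t u v => m (map αA αP t) (m u v) - m (m t u) (map αA αP v)) ?_ ?_ ?_ ?_ ht hu hv
  · rintro _ ⟨p₁, p₂, rfl, a, ha, x, hx, rfl⟩ _ ⟨q₁, q₂, rfl, b, hb, y, hy, rfl⟩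
      _ ⟨r₁, r₂, rfl, c, hc, z, hz, rfl⟩
    rw [sub_eq_zero]
    simp only [map_tmul, hm hb hy hc hz, hm ha hx hb hy, map_smul, LinearMap.smul_apply,
      hm (hAα ha) (hPα hx) (hAμ hb hc) (hPμ hy hz), hm (hAμ ha hb) (hPμ hx hy) (hAα hc) (hPα hz),
      hAassoc ha hb hc, hPassoc hx hy hz, smul_smul]
    rw [hε.map_add_left, hε.map_add_right]
    congr 1
    ring
  all_goals
    intros
    constructor <;> intros <;>
      simp only [map_add, map_smul, LinearMap.add_apply, LinearMap.smul_apply] <;> module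

theorem IsColorTensorProduct.skew_tmul (hε : IsBicharacter ε)
    (hcomm : IsColorCommutative ℬA ε μA)
    (hP : IsHomLieColor ℬP ε brP αP) (hbr : IsColorTensorProduct ℬA ℬP ε μA brP br)
    {p₁ p₂ q₁ q₂ : G} {a b : A} {x y : P} (ha : a ∈ ℬA p₁) (hx : x ∈ ℬP p₂)
    (hb : b ∈ ℬA q₁) (hy : y ∈ ℬP q₂) :
    br (a ⊗ₜ x) (b ⊗ₜ y) + ε (p₁ + p₂) (q₁ + q₂) • br (b ⊗ₜ y) (a ⊗ₜ x) = 0 := by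
  obtain ⟨-, -, -, hskew, -⟩ := hP
  simp only [hbr ha hx hb hy, hbr hb hy ha hx, hcomm ha hb, hskew hx hy, ← smul_tmul', tmul_neg,
    tmul_smul, smul_neg, smul_smul]
  match_scalars
  simp only [hε.map_add_left, hε.map_add_right, hε.swap_eq_inv p₁ q₂]
  field_simp [hε.ne_zero]
  ring

theorem IsColorTensorProduct.hom_jacobi_tmul (hA : IsHomAssociativeColor ℬA ε μA αA)
    (hcomm : IsColorCommutative ℬA ε μA)
    (hP : IsHomLieColor ℬP ε brP αP) (hbr : IsColorTensorProduct ℬA ℬP ε μA brP br)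
    {p₁ p₂ q₁ q₂ r₁ r₂ : G} {a b c : A} {x y z : P} (ha : a ∈ ℬA p₁) (hx : x ∈ ℬP p₂)
    (hb : b ∈ ℬA q₁) (hy : y ∈ ℬP q₂) (hc : c ∈ ℬA r₁) (hz : z ∈ ℬP r₂) :
    ε (r₁ + r₂) (p₁ + p₂) • br (map αA αP (a ⊗ₜ x)) (br (b ⊗ₜ y) (c ⊗ₜ z)) +
      ε (p₁ + p₂) (q₁ + q₂) • br (map αA αP (b ⊗ₜ y)) (br (c ⊗ₜ z) (a ⊗ₜ x)) +
      ε (q₁ + q₂) (r₁ + r₂) • br (map αA αP (c ⊗ₜ z)) (br (a ⊗ₜ x) (b ⊗ₜ y)) = 0 := by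
  have hbac := hA.left_comm hcomm ha hb hc
  have hcab := hA.left_comm hcomm ha hc hb
  obtain ⟨hε, hAμ, hAα, -⟩ := hA
  obtain ⟨-, hPbr, hPα, -, hjacobi⟩ := hP
  calc _ = (ε r₁ p₁ * ε r₂ p₁ * ε q₂ r₁ * ε p₂ q₁) • (μA (αA a) (μA b c) ⊗ₜ
        (ε r₂ p₂ • brP (αP x) (brP y z) + ε p₂ q₂ • brP (αP y) (brP z x) +
          ε q₂ r₂ • brP (αP z) (brP x y))) := by
        simp only [map_tmul, hbr hb hy hc hz, hbr hc hz ha hx, hbr ha hx hb hy, map_smul,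
          hbr (hAα ha) (hPα hx) (hAμ hb hc) (hPbr hy hz),
          hbr (hAα hb) (hPα hy) (hAμ hc ha) (hPbr hz hx),
          hbr (hAα hc) (hPα hz) (hAμ ha hb) (hPbr hx hy)]
        simp only [hcomm hc ha, hbac, hcab, hcomm hc hb, map_smul,
          ← smul_tmul', tmul_add, tmul_smul, smul_add, smul_smul]
        match_scalars <;>
          simp only [hε.map_add_left, hε.map_add_right, hε.swap_eq_inv p₂ r₁,
            hε.swap_eq_inv p₁ q₁, hε.swap_eq_inv p₁ q₂, hε.swap_eq_inv q₁ r₁, hε.swap_eq_inv q₁ r₂] <;>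
          field_simp [hε.ne_zero]
    _ = 0 := by rw [hjacobi hx hy hz, tmul_zero, smul_zero]

theorem IsHomLieColor.tensorProduct (hA : IsHomAssociativeColor ℬA ε μA αA)
    (hcomm : IsColorCommutative ℬA ε μA)
    (hP : IsHomLieColor ℬP ε brP αP) (hbr : IsColorTensorProduct ℬA ℬP ε μA brP br) :
    IsHomLieColor (tensorGrading ℬA ℬP) ε br (map αA αP) := by
  refine ⟨hA.1, hbr.isEvenBilinear hA.2.1 hP.2.1, hA.2.2.1.tensorProductMap hP.2.2.1, ?_, ?_⟩
  · intro ga gb t u ht hu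
    rw [tensorGrading_eq_span] at ht hu
    rw [eq_neg_iff_add_eq_zero]
    refine eq_zero_of_mem_span₂ (fun t u => br t u + ε ga gb • br u t) ?_ ?_ ?_ ht hu
    · rintro _ ⟨p₁, p₂, rfl, a, ha, x, hx, rfl⟩ _ ⟨q₁, q₂, rfl, b, hb, y, hy, rfl⟩
      exact hbr.skew_tmul hA.1 hcomm hP ha hx hb hy
    all_goals
      intros
      constructor <;> intros <;>
        simp only [map_add, map_smul, LinearMap.add_apply, LinearMap.smul_apply] <;> module
  · intro ga gb gc t u v ht hu hv
    rw [tensorGrading_eq_span] at ht hu hv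
    refine eq_zero_of_mem_span₃ (fun t u v => ε gc ga • br (map αA αP t) (br u v) +
      ε ga gb • br (map αA αP u) (br v t) + ε gb gc • br (map αA αP v) (br t u))
      ?_ ?_ ?_ ?_ ht hu hv
    · rintro _ ⟨p₁, p₂, rfl, a, ha, x, hx, rfl⟩ _ ⟨q₁, q₂, rfl, b, hb, y, hy, rfl⟩
        _ ⟨r₁, r₂, rfl, c, hc, z, hz, rfl⟩
      exact hbr.hom_jacobi_tmul hA hcomm hP ha hx hb hy hc hz
    all_goals
      intros
      constructor <;> intros <;>
        simp only [map_add, map_smul, LinearMap.add_apply, LinearMap.smul_apply] <;> module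

theorem IsColorTensorProduct.hom_leibniz_tmul (hA : IsHomAssociativeColor ℬA ε μA αA)
    (hcomm : IsColorCommutative ℬA ε μA)
    (hP : IsHomPoissonColor ℬP ε μP brP αP) (hbr : IsColorTensorProduct ℬA ℬP ε μA brP br)
    (hm : IsColorTensorProduct ℬA ℬP ε μA μP m)
    {p₁ p₂ q₁ q₂ r₁ r₂ : G} {a b c : A} {x y z : P} (ha : a ∈ ℬA p₁) (hx : x ∈ ℬP p₂)
    (hb : b ∈ ℬA q₁) (hy : y ∈ ℬP q₂) (hc : c ∈ ℬA r₁) (hz : z ∈ ℬP r₂) :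
    br (map αA αP (a ⊗ₜ x)) (m (b ⊗ₜ y) (c ⊗ₜ z)) =
      m (br (a ⊗ₜ x) (b ⊗ₜ y)) (map αA αP (c ⊗ₜ z)) +
        ε (p₁ + p₂) (q₁ + q₂) • m (map αA αP (b ⊗ₜ y)) (br (a ⊗ₜ x) (c ⊗ₜ z)) := by
  have hbac := hA.left_comm hcomm ha hb hc
  obtain ⟨hε, hAμ, hAα, hAassoc⟩ := hA
  obtain ⟨⟨-, hPμ, hPα, -⟩, ⟨-, hPbr, -⟩, hleibniz⟩ := hP
  simp only [map_tmul, hm hb hy hc hz, hbr ha hx hb hy, hbr ha hx hc hz, map_smul,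
    LinearMap.smul_apply, hbr (hAα ha) (hPα hx) (hAμ hb hc) (hPμ hy hz),
    hm (hAμ ha hb) (hPbr hx hy) (hAα hc) (hPα hz), hm (hAα hb) (hPα hy) (hAμ ha hc) (hPbr hx hz)]
  simp only [← hAassoc ha hb hc, hbac, hleibniz hx hy hz, ← smul_tmul', tmul_add, tmul_smul,
    smul_add, smul_smul]
  match_scalars <;>
    simp only [hε.map_add_left, hε.map_add_right, hε.swap_eq_inv p₁ q₁, hε.swap_eq_inv p₁ q₂] <;>
    field_simp [hε.ne_zero]

theorem IsColorTensorProduct.hom_leibniz (hA : IsHomAssociativeColor ℬA ε μA αA)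
    (hcomm : IsColorCommutative ℬA ε μA)
    (hP : IsHomPoissonColor ℬP ε μP brP αP) (hbr : IsColorTensorProduct ℬA ℬP ε μA brP br)
    (hm : IsColorTensorProduct ℬA ℬP ε μA μP m) {ga gb gc : G} {t u v : A ⊗[K] P}
    (ht : t ∈ tensorGrading ℬA ℬP ga) (hu : u ∈ tensorGrading ℬA ℬP gb)
    (hv : v ∈ tensorGrading ℬA ℬP gc) :
    br (map αA αP t) (m u v) = m (br t u) (map αA αP v) + ε ga gb • m (map αA αP u) (br t v) := by
  rw [tensorGrading_eq_span] at ht hu hv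
  rw [← sub_eq_zero]
  refine eq_zero_of_mem_span₃ (fun t u v => br (map αA αP t) (m u v) -
    (m (br t u) (map αA αP v) + ε ga gb • m (map αA αP u) (br t v))) ?_ ?_ ?_ ?_ ht hu hv
  · rintro _ ⟨p₁, p₂, rfl, a, ha, x, hx, rfl⟩ _ ⟨q₁, q₂, rfl, b, hb, y, hy, rfl⟩
      _ ⟨r₁, r₂, rfl, c, hc, z, hz, rfl⟩
    exact sub_eq_zero.mpr (hbr.hom_leibniz_tmul hA hcomm hP hm ha hx hb hy hc hz)
  all_goals
    intros
    constructor <;> intros <;>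
      simp only [map_add, map_smul, LinearMap.add_apply, LinearMap.smul_apply] <;> module

end TensorAlgebra

/-- the tensor product of a commutative Hom-associative color
algebra `A` and a Hom-Poisson color algebra `P`, graded by
`(A ⊗ P)_g = ⊕_{a + x = g} A_a ⊗ P_x`, with
`(a ⊗ x)(b ⊗ y) = ε(x, b) (a·b) ⊗ (x ∗ y)`,
`{a ⊗ x, b ⊗ y} = ε(x, b) (a·b) ⊗ [x, y]` and `α = α_A ⊗ α_P`, is a Hom-Poisson
color algebra. -/
theorem stmt12 {A P : Type*} [AddCommGroup A] [Module K A]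
    [AddCommGroup P] [Module K P]
    (ℬA : G → Submodule K A) (ℬP : G → Submodule K P) (ε : G → G → K)
    (μA : A →ₗ[K] A →ₗ[K] A) (αA : A →ₗ[K] A)
    (hA : IsHomAssociativeColor ℬA ε μA αA)
    (hcomm : ∀ ⦃a b : G⦄ ⦃x y : A⦄, x ∈ ℬA a → y ∈ ℬA b →
      μA x y = ε a b • μA y x)
    (μP brP : P →ₗ[K] P →ₗ[K] P) (αP : P →ₗ[K] P)
    (hP : IsHomPoissonColor ℬP ε μP brP αP)
    (m br : (A ⊗[K] P) →ₗ[K] (A ⊗[K] P) →ₗ[K] (A ⊗[K] P))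
    (hm : ∀ ⦃ga gx gb gy : G⦄ ⦃a b : A⦄ ⦃x y : P⦄,
      a ∈ ℬA ga → x ∈ ℬP gx → b ∈ ℬA gb → y ∈ ℬP gy →
      m (a ⊗ₜ[K] x) (b ⊗ₜ[K] y) = ε gx gb • (μA a b ⊗ₜ[K] μP x y))
    (hbr : ∀ ⦃ga gx gb gy : G⦄ ⦃a b : A⦄ ⦃x y : P⦄,
      a ∈ ℬA ga → x ∈ ℬP gx → b ∈ ℬA gb → y ∈ ℬP gy →
      br (a ⊗ₜ[K] x) (b ⊗ₜ[K] y) = ε gx gb • (μA a b ⊗ₜ[K] brP x y)) :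
    IsHomPoissonColor
      (fun g => ⨆ p : {p : G × G // p.1 + p.2 = g},
        Submodule.map₂ (TensorProduct.mk K A P) (ℬA p.1.1) (ℬP p.1.2))
      ε m br (TensorProduct.map αA αP) :=
  ⟨hA.tensorProduct hP.1 hm, IsHomLieColor.tensorProduct hA hcomm hP.2.1 hbr,
    fun _ _ _ _ _ _ => IsColorTensorProduct.hom_leibniz hA hcomm hP hbr hm⟩
end

section
/- Let (A, μ, ε, α) be a Hom-associative color algebra and let R : A → A be a Rota-Baxter operator of weight λ ∈ K on (A, μ), i.e. an even linear map with R∘α = α∘R and R(x)·R(y) = R(R(x)·y + x·R(y) + λ x·y) for all homogeneous x, y (writing x·y for μ(x,y)). Define the ε-commutator bracket {x,y} = x·y − ε(x,y) y·x on homogeneous elements. Then (A, μ, {·,·}, ε, α) is a Hom-Poisson color algebra, and R is also a Rota-Baxter operator of weight λ for the bracket, i.e. {R(x), R(y)} = R({R(x), y} + {x, R(y)} + λ{x,y}) for all homogeneous x, y. -/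
open scoped TensorProduct

variable {K G V : Type*} [Field K] [AddCommGroup G] [AddCommGroup V] [Module K V]

/-- if `R` is a Rota-Baxter operator of weight `λ` on a
Hom-associative color algebra `(A, μ, ε, α)`, then `A` with `μ` and the
ε-commutator bracket `{x, y} = x·y − ε(x, y) y·x` is a Hom-Poisson color
algebra, and `R` is a Rota-Baxter operator of weight `λ` for the bracket. -/
theorem stmt13 (ℬ : G → Submodule K V) (ε : G → G → K)
    (μ : V →ₗ[K] V →ₗ[K] V) (α : V →ₗ[K] V)
    (hA : IsHomAssociativeColor ℬ ε μ α)
    (lam : K) (R : V →ₗ[K] V) (hReven : IsEvenLinear ℬ R)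
    (hRα : R.comp α = α.comp R)
    (hRμ : ∀ ⦃a b : G⦄ ⦃x y : V⦄, x ∈ ℬ a → y ∈ ℬ b →
      μ (R x) (R y) = R (μ (R x) y + μ x (R y) + lam • μ x y))
    (br : V →ₗ[K] V →ₗ[K] V)
    (hbrdef : ∀ ⦃a b : G⦄ ⦃x y : V⦄, x ∈ ℬ a → y ∈ ℬ b →
      br x y = μ x y - ε a b • μ y x) :
    IsHomPoissonColor ℬ ε μ br α ∧
      ∀ ⦃a b : G⦄ ⦃x y : V⦄, x ∈ ℬ a → y ∈ ℬ b →
        br (R x) (R y) = R (br (R x) y + br x (R y) + lam • br x y) := by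
  obtain ⟨⟨hne, hsym, hadd1, hadd2⟩, hμb, hαe, hassoc⟩ := hA
  have hinv : ∀ a b : G, ε b a = (ε a b)⁻¹ := fun a b =>
    eq_inv_of_mul_eq_one_right (hsym a b)
  have hbrb : IsEvenBilinear ℬ br := by
    intro a b x y hx hy
    rw [hbrdef hx hy]
    have h2 : μ y x ∈ ℬ (a + b) := by
      have := hμb hy hx; rwa [add_comm] at this
    exact Submodule.sub_mem _ (hμb hx hy) (Submodule.smul_mem _ _ h2)
  refine ⟨⟨⟨⟨hne, hsym, hadd1, hadd2⟩, hμb, hαe, hassoc⟩, ⟨⟨hne, hsym, hadd1, hadd2⟩, hbrb, hαe, ?_, ?_⟩, ?_⟩, ?_⟩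
  · -- skew symmetry
    intro a b x y hx hy
    rw [hbrdef hx hy, hbrdef hy hx]
    simp only [hinv a b]
    match_scalars <;> field_simp [hne a b]
  · -- Jacobi
    intro a b c x y z hx hy hz
    rw [hbrdef hy hz, hbrdef hz hx, hbrdef hx hy]
    simp only [map_sub, map_smul]
    rw [hbrdef (hαe hx) (hμb hy hz), hbrdef (hαe hx) (hμb hz hy),
        hbrdef (hαe hy) (hμb hz hx), hbrdef (hαe hy) (hμb hx hz),
        hbrdef (hαe hz) (hμb hx hy), hbrdef (hαe hz) (hμb hy hx),
        hassoc hx hy hz, hassoc hx hz hy, hassoc hy hz hx,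
        hassoc hy hx hz, hassoc hz hx hy, hassoc hz hy hx]
    simp only [hadd1, hinv a b, hinv a c, hinv b c]
    match_scalars <;> field_simp [hne a b, hne a c, hne b c] <;> ring
  · -- Leibniz
    intro a b c x y z hx hy hz
    rw [hbrdef (hαe hx) (hμb hy hz), hbrdef hx hy, hbrdef hx hz]
    simp only [map_sub, map_smul, LinearMap.sub_apply, LinearMap.smul_apply]
    rw [hassoc hx hy hz, hassoc hy hx hz, hassoc hy hz hx]
    simp only [hadd1, hinv a b, hinv a c, hinv b c]
    match_scalars <;> field_simp [hne a b, hne a c, hne b c] <;> ring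
  · -- Rota-Baxter for the bracket
    intro a b x y hx hy
    rw [hbrdef (hReven hx) (hReven hy), hRμ hx hy, hRμ hy hx,
        hbrdef (hReven hx) hy, hbrdef hx (hReven hy), hbrdef hx hy]
    simp only [map_add, map_sub, map_smul]
    module
end

section
/- Let (A, μ, ε, α) be a Hom-associative color algebra and let N : A → A be a Nijenhuis operator on (A, μ), i.e. an even linear map with N∘α = α∘N and N(x)·N(y) = N(N(x)·y + x·N(y) − N(x·y)) for all homogeneous x, y (writing x·y for μ(x,y)). Define the ε-commutator bracket {x,y} = x·y − ε(x,y) y·x on homogeneous elements. Then N is also a Nijenhuis operator for the bracket, i.e. {N(x), N(y)} = N({N(x), y} + {x, N(y)} − N({x,y})) for all homogeneous x, y. -/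
open scoped TensorProduct

variable {K G V : Type*} [Field K] [AddCommGroup G] [AddCommGroup V] [Module K V]

/-- if `N` is a Nijenhuis operator on a Hom-associative color
algebra `(A, μ, ε, α)`, then `N` is also a Nijenhuis operator for the
ε-commutator bracket `{x, y} = x·y − ε(x, y) y·x`. -/
theorem stmt14 (ℬ : G → Submodule K V) (ε : G → G → K)
    (μ : V →ₗ[K] V →ₗ[K] V) (α : V →ₗ[K] V)
    (hA : IsHomAssociativeColor ℬ ε μ α)
    (N : V →ₗ[K] V) (hNeven : IsEvenLinear ℬ N)
    (hNα : N.comp α = α.comp N)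
    (hNμ : ∀ ⦃a b : G⦄ ⦃x y : V⦄, x ∈ ℬ a → y ∈ ℬ b →
      μ (N x) (N y) = N (μ (N x) y + μ x (N y) - N (μ x y)))
    (br : V →ₗ[K] V →ₗ[K] V)
    (hbrdef : ∀ ⦃a b : G⦄ ⦃x y : V⦄, x ∈ ℬ a → y ∈ ℬ b →
      br x y = μ x y - ε a b • μ y x) :
    ∀ ⦃a b : G⦄ ⦃x y : V⦄, x ∈ ℬ a → y ∈ ℬ b →
      br (N x) (N y) = N (br (N x) y + br x (N y) - N (br x y)) := by
  intro a b x y hx hy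
  have hNx := hNeven hx
  have hNy := hNeven hy
  rw [hbrdef hNx hNy, hbrdef hNx hy, hbrdef hx hNy, hbrdef hx hy,
    hNμ hx hy, hNμ hy hx]
  simp only [map_add, map_sub, map_smul]
  module
end
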